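/- Let A be a bounded self-adjoint operator on a complex Hilbert space H whose real spectrum is a disjoint union σ ∪ Σ, and let d > 0 satisfy d ≤ |x − y| for all x ∈ σ and y ∈ Σ. Assume in addition that the convex hull of σ is disjoint from Σ, or the convex hull of Σ is disjoint from σ. Let V be a non-negative bounded operator on H, and let Q be an orthogonal projection on H (self-adjoint and idempotent) that commutes with A + V. Then sin(2·arcsin(‖E_A(σ) − Q‖)) ≤ ‖V‖/d. -/

import Mathlib

/-!
Write `P = E_A(σ)` and `t = ‖P - Q‖`, so that `sin (2 arcsin t) = 2 t √(1 - t²)`. For two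
orthogonal projections `(P - Q)² - (P - Q)⁴ = [P, Q]* [P, Q]`, hence `t √(1 - t²) ≤ ‖[P, Q]‖`.
Moreover `[P, Q] = Y - Y*` with `Y = P Q (1 - P)`, where `Y` maps the range of `1 - P` into that
of `P` and `Y*` the other way round, so `‖[P, Q]‖ ≤ ‖Y‖`.

The block `Y` solves the Sylvester equation
`(A - m) P · Y - Y · (A - m) = P [A, Q] (1 - P)`. If the convex hull of `σ` misses `τ`, then `σ`
lies in an interval `[m - r, m + r]` and `τ` at distance at least `r + d` from `m`, so
`‖(A - m) P‖ ≤ r` while `A - m` has an inverse of norm at most `1 / (r + d)` on the range of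
`1 - P`; this gives `‖Y‖ ≤ ‖[A, Q]‖ / d`. The other convexity case follows by taking adjoints.

Finally `[A, Q] = [Q, V] = [Q, V - ‖V‖ / 2]`; since `0 ≤ V`, `‖V - ‖V‖ / 2‖ ≤ ‖V‖ / 2`, and
`‖[Q, W]‖ ≤ ‖W‖` for every `W` because `2 Q - 1` is unitary.
-/

open ContinuousLinearMap Real

/-- The spectral projection of a bounded (self-adjoint) operator `T` associated with a set
`Δ ⊆ ℝ`, defined via the real continuous functional calculus applied to the indicator
function of `Δ`. -/
noncomputable def specProj {H : Type*} [NormedAddCommGroup H] [InnerProductSpace ℂ H]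
    [CompleteSpace H] (T : H →L[ℂ] H) (Δ : Set ℝ) : H →L[ℂ] H :=
  cfc (Set.indicator Δ fun _ => (1 : ℝ)) T

lemma IsIdempotentElem.sub_sq_sub_sub_sq_sq {R : Type*} [Ring R] {p q : R}
    (hp : IsIdempotentElem p) (hq : IsIdempotentElem q) :
    (p - q) ^ 2 - ((p - q) ^ 2) ^ 2 = (q * p - p * q) * (p * q - q * p) := by
  have hp' (x : R) : p * (p * x) = p * x := by rw [← mul_assoc, hp.eq]
  have hq' (x : R) : q * (q * x) = q * x := by rw [← mul_assoc, hq.eq]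
  simp only [sq, mul_sub, sub_mul, mul_assoc, hp', hq', hp.eq, hq.eq]
  abel

section CStarAlgebra

variable {R : Type*} [CStarAlgebra R] {p q : R}

lemma IsStarProjection.norm_commutator_le (hq : IsStarProjection q) (a : R) :
    ‖q * a - a * q‖ ≤ ‖a‖ := by
  have hu := hq.two_mul_sub_one_mem_unitary
  have h : (2 : ℝ) • (q * a - a * q) = (2 * q - 1) * a - a * (2 * q - 1) := by
    rw [two_smul]; noncomm_ring
  have := norm_sub_le ((2 * q - 1) * a) (a * (2 * q - 1))
  rw [CStarRing.norm_mem_unitary_mul a hu, CStarRing.norm_mul_mem_unitary a hu, ← h,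
    norm_smul, Real.norm_two] at this
  linarith

variable [PartialOrder R] [StarOrderedRing R]

lemma norm_sub_algebraMap_half_norm_le {v : R} (hv : 0 ≤ v) :
    ‖v - algebraMap ℝ R (‖v‖ / 2)‖ ≤ ‖v‖ / 2 := by
  nontriviality R
  have hcfc : v - algebraMap ℝ R (‖v‖ / 2) = cfc (fun x : ℝ => x - ‖v‖ / 2) v := by
    rw [cfc_sub _ _, cfc_id' ℝ v, cfc_const _ v]
  rw [hcfc]
  refine norm_cfc_le (by positivity) fun x hx => ?_
  have h0 : 0 ≤ x := spectrum_nonneg_of_nonneg hv hx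
  have h1 : ‖x‖ ≤ ‖v‖ := spectrum.norm_le_norm_of_mem hx
  rw [Real.norm_eq_abs, abs_le] at h1 ⊢
  constructor <;> linarith

namespace IsStarProjection

lemma norm_commutator_le_of_nonneg (hq : IsStarProjection q) {v : R} (hv : 0 ≤ v) :
    ‖q * v - v * q‖ ≤ ‖v‖ / 2 := by
  have hshift : q * v - v * q =
      q * (v - algebraMap ℝ R (‖v‖ / 2)) - (v - algebraMap ℝ R (‖v‖ / 2)) * q := by
    rw [mul_sub, sub_mul, Algebra.commutes _ q]; abel
  exact hshift ▸ (hq.norm_commutator_le _).trans (norm_sub_algebraMap_half_norm_le hv)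

lemma sq_norm_sub_sub_pow_four_mem_spectrum [Nontrivial R] (hp : IsStarProjection p)
    (hq : IsStarProjection q) :
    ‖p - q‖ ^ 2 - ‖p - q‖ ^ 4 ∈ spectrum ℝ (star (p * q - q * p) * (p * q - q * p)) := by
  have hD : IsSelfAdjoint (p - q) := hp.isSelfAdjoint.sub hq.isSelfAdjoint
  have hnorm : ‖(p - q) ^ 2‖ = ‖p - q‖ ^ 2 := hD.norm_pow_two_pow 1
  have hstar : star (p * q - q * p) = q * p - p * q := by
    simp [hp.isSelfAdjoint.star_eq, hq.isSelfAdjoint.star_eq]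
  have hcfc : (p - q) ^ 2 - ((p - q) ^ 2) ^ 2 = cfc (fun s : ℝ => s - s ^ 2) ((p - q) ^ 2) := by
    rw [cfc_sub _ _, cfc_id' ℝ _, cfc_pow_id _ 2]
  rw [hstar, ← hp.isIdempotentElem.sub_sq_sub_sub_sq_sq hq.isIdempotentElem, hcfc,
    cfc_map_spectrum _ _]
  exact ⟨_, hnorm ▸ CStarAlgebra.norm_mem_spectrum_of_nonneg hD.sq_nonneg, by ring⟩

lemma norm_sub_le_one (hp : IsStarProjection p) (hq : IsStarProjection q) : ‖p - q‖ ≤ 1 := by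
  nontriviality R
  have := spectrum_nonneg_of_nonneg (star_mul_self_nonneg _)
    (hp.sq_norm_sub_sub_pow_four_mem_spectrum hq)
  by_contra! h
  nlinarith [one_lt_pow₀ h two_ne_zero]

lemma norm_sub_mul_sqrt_le (hp : IsStarProjection p) (hq : IsStarProjection q) :
    ‖p - q‖ * √(1 - ‖p - q‖ ^ 2) ≤ ‖p * q - q * p‖ := by
  nontriviality R
  set K := p * q - q * p
  have hle : ‖p - q‖ ^ 2 - ‖p - q‖ ^ 4 ≤ ‖K‖ ^ 2 := by
    have := spectrum.norm_le_norm_of_mem (hp.sq_norm_sub_sub_pow_four_mem_spectrum hq)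
    rw [CStarRing.norm_star_mul_self, Real.norm_eq_abs] at this
    nlinarith [le_abs_self (‖p - q‖ ^ 2 - ‖p - q‖ ^ 4)]
  calc ‖p - q‖ * √(1 - ‖p - q‖ ^ 2) = √(‖p - q‖ ^ 2 - ‖p - q‖ ^ 4) := by
        rw [show ‖p - q‖ ^ 2 - ‖p - q‖ ^ 4 = ‖p - q‖ ^ 2 * (1 - ‖p - q‖ ^ 2) by ring,
          Real.sqrt_mul (sq_nonneg _), Real.sqrt_sq (norm_nonneg _)]
    _ ≤ √(‖K‖ ^ 2) := Real.sqrt_le_sqrt hle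
    _ = ‖K‖ := Real.sqrt_sq (norm_nonneg K)

end IsStarProjection

end CStarAlgebra

section InnerProductSpace

variable {𝕜 E : Type*} [RCLike 𝕜] [NormedAddCommGroup E] [InnerProductSpace 𝕜 E] [CompleteSpace E]
  {p : E →L[𝕜] E}

namespace IsStarProjection

lemma inner_apply_one_sub_apply (hp : IsStarProjection p) (x y : E) :
    inner 𝕜 (p x) ((1 - p) y) = 0 := by
  rw [← adjoint_inner_right, hp.isSelfAdjoint.adjoint_eq]
  change inner 𝕜 x ((p * (1 - p)) y) = 0
  rw [hp.mul_one_sub_self, zero_apply, inner_zero_right]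

lemma sq_norm_apply_add_sq_norm_one_sub_apply (hp : IsStarProjection p) (x : E) :
    ‖p x‖ ^ 2 + ‖(1 - p) x‖ ^ 2 = ‖x‖ ^ 2 := by
  have h := norm_add_sq_eq_norm_sq_add_norm_sq_of_inner_eq_zero _ _
    (hp.inner_apply_one_sub_apply x x)
  rw [← add_apply, add_sub_cancel, one_apply_eq_self] at h
  rw [sq, sq, sq, h]

lemma norm_commutator_le_norm_mul_mul_one_sub (hp : IsStarProjection p) {a : E →L[𝕜] E}
    (ha : IsSelfAdjoint a) : ‖p * a - a * p‖ ≤ ‖p * a * (1 - p)‖ := by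
  set z := p * a * (1 - p)
  set w := (1 - p) * a * p
  have hw : ‖w‖ = ‖z‖ := by
    rw [← norm_star]
    simp [z, w, star_mul, hp.isSelfAdjoint.star_eq, ha.star_eq, mul_assoc]
  have hz1 : z * (1 - p) = z := by rw [mul_assoc, hp.one_sub.isIdempotentElem.eq]
  have hw1 : w * p = w := by rw [mul_assoc, hp.isIdempotentElem.eq]
  have hsplit : p * a - a * p = z - w := by simp only [z, w]; noncomm_ring
  rw [hsplit]
  refine opNorm_le_bound _ (norm_nonneg _) fun x => ?_
  have horth : inner 𝕜 (z x) (-(w x)) = 0 := by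
    change inner 𝕜 (p (a ((1 - p) x))) (-((1 - p) (a (p x)))) = 0
    rw [← map_neg]
    exact hp.inner_apply_one_sub_apply _ _
  have hzx : ‖z x‖ ≤ ‖z‖ * ‖(1 - p) x‖ := by
    rw [show z x = z ((1 - p) x) from congr($hz1.symm x)]; exact le_opNorm _ _
  have hwx : ‖w x‖ ≤ ‖z‖ * ‖p x‖ := by
    rw [← hw, show w x = w (p x) from congr($hw1.symm x)]; exact le_opNorm _ _
  have hpyth := norm_add_sq_eq_norm_sq_add_norm_sq_of_inner_eq_zero _ _ horth
  rw [norm_neg, ← sub_eq_add_neg, ← sub_apply] at hpyth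
  have hpx := hp.sq_norm_apply_add_sq_norm_one_sub_apply x
  refine (pow_le_pow_iff_left₀ (norm_nonneg _) (by positivity) two_ne_zero).1 ?_
  calc ‖(z - w) x‖ ^ 2 = ‖z x‖ ^ 2 + ‖w x‖ ^ 2 := by rw [sq, sq, sq, hpyth]
    _ ≤ (‖z‖ * ‖(1 - p) x‖) ^ 2 + (‖z‖ * ‖p x‖) ^ 2 := by gcongr
    _ = (‖z‖ * ‖x‖) ^ 2 := by rw [mul_pow _ ‖x‖, ← hpx]; ring

end IsStarProjection

end InnerProductSpace

section RealSets

variable {σ τ : Set ℝ} {d : ℝ}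

lemma exists_center_radius_of_disjoint_convexHull (hne : σ.Nonempty)
    (hbdd : Bornology.IsBounded σ) (hdist : ∀ x ∈ σ, ∀ y ∈ τ, d ≤ |x - y|)
    (hconv : Disjoint (convexHull ℝ σ) τ) :
    ∃ m r : ℝ, 0 ≤ r ∧ (∀ x ∈ σ, |x - m| ≤ r) ∧ ∀ y ∈ τ, r + d ≤ |y - m| := by
  obtain ⟨x₀, hx₀⟩ := hne
  set a := sInf σ
  set b := sSup σ
  have ha (x) (hx : x ∈ σ) : a ≤ x := csInf_le hbdd.bddBelow hx
  have hb (x) (hx : x ∈ σ) : x ≤ b := le_csSup hbdd.bddAbove hx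
  refine ⟨(a + b) / 2, (b - a) / 2, by linarith [ha x₀ hx₀, hb x₀ hx₀],
    fun x hx => abs_le.2 ⟨by linarith [ha x hx], by linarith [hb x hx]⟩, fun y hy => ?_⟩
  have hside : (∀ x ∈ σ, y < x) ∨ ∀ x ∈ σ, x < y := by
    by_contra! ⟨⟨x₁, hx₁, h₁⟩, ⟨x₂, hx₂, h₂⟩⟩
    refine Set.disjoint_right.1 hconv hy (segment_subset_convexHull hx₁ hx₂ ?_)
    rw [segment_eq_Icc (h₁.trans h₂)]
    exact ⟨h₁, h₂⟩
  rcases hside with hlt | hgt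
  · have hya : y + d ≤ a := le_csInf ⟨x₀, hx₀⟩ fun x hx => by
      linarith [hdist x hx y hy, abs_of_pos (sub_pos.2 (hlt x hx))]
    have hya' : y ≤ a := le_csInf ⟨x₀, hx₀⟩ fun x hx => (hlt x hx).le
    rw [abs_of_nonpos (by linarith [hb x₀ hx₀, ha x₀ hx₀])]
    linarith
  · have hby : b ≤ y - d := csSup_le ⟨x₀, hx₀⟩ fun x hx => by
      linarith [hdist x hx y hy, abs_of_neg (sub_neg.2 (hgt x hx))]
    have hby' : b ≤ y := csSup_le ⟨x₀, hx₀⟩ fun x hx => (hgt x hx).le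
    rw [abs_of_nonneg (by linarith [hb x₀ hx₀, ha x₀ hx₀])]
    linarith

lemma continuousOn_indicator_union_right (hd : 0 < d) (hdist : ∀ x ∈ σ, ∀ y ∈ τ, d ≤ |x - y|)
    {f : ℝ → ℝ} (hf : ContinuousOn f τ) : ContinuousOn (τ.indicator f) (σ ∪ τ) := by
  refine continuousOn_of_locally_continuousOn fun x hx =>
    ⟨Metric.ball x d, Metric.isOpen_ball, Metric.mem_ball_self hd, ?_⟩
  rcases hx with hxσ | hxτ
  · have hout : ∀ z ∈ (σ ∪ τ) ∩ Metric.ball x d, z ∉ τ := fun z ⟨_, hzx⟩ hzτ => by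
      have := hdist x hxσ z hzτ
      rw [Metric.mem_ball, Real.dist_eq, abs_sub_comm] at hzx
      linarith
    exact continuousOn_const.congr fun z hz => Set.indicator_of_notMem (hout z hz) f
  · have hin : (σ ∪ τ) ∩ Metric.ball x d ⊆ τ := fun z ⟨hz, hzx⟩ =>
      hz.resolve_left fun hzσ => by
        have := hdist z hzσ x hxτ
        rw [Metric.mem_ball, Real.dist_eq] at hzx
        linarith
    exact (hf.mono hin).congr fun z hz => Set.indicator_of_mem (hin hz) f

lemma continuousOn_indicator_union_left (hd : 0 < d) (hdist : ∀ x ∈ σ, ∀ y ∈ τ, d ≤ |x - y|)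
    {f : ℝ → ℝ} (hf : ContinuousOn f σ) : ContinuousOn (σ.indicator f) (σ ∪ τ) :=
  Set.union_comm τ σ ▸
    continuousOn_indicator_union_right hd (fun y hy x hx => abs_sub_comm x y ▸ hdist x hx y hy) hf

end RealSets

lemma norm_le_div_of_mul_sub_mul_eq {R : Type*} [NormedRing R] {N M G E Y C : R} {r d : ℝ}
    (hd : 0 < d) (hN : ‖N‖ ≤ r) (hG : ‖G‖ ≤ (r + d)⁻¹) (hMG : M * G = E) (hYE : Y * E = Y)
    (hC : N * Y - Y * M = C) : ‖Y‖ ≤ ‖C‖ / d := by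
  have hr : 0 ≤ r := (norm_nonneg N).trans hN
  have hrd : 0 < r + d := by linarith
  have hY : Y = N * Y * G - C * G := by rw [← hC, sub_mul, mul_assoc Y, hMG, hYE, sub_sub_cancel]
  have hbound : ‖Y‖ ≤ (r * ‖Y‖ + ‖C‖) * (r + d)⁻¹ := calc
    ‖Y‖ = ‖N * Y * G - C * G‖ := congrArg norm hY
    _ ≤ ‖N‖ * ‖Y‖ * ‖G‖ + ‖C‖ * ‖G‖ :=
      (norm_sub_le _ _).trans (add_le_add norm_mul₃_le (norm_mul_le _ _))
    _ ≤ r * ‖Y‖ * (r + d)⁻¹ + ‖C‖ * (r + d)⁻¹ := by gcongr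
    _ = (r * ‖Y‖ + ‖C‖) * (r + d)⁻¹ := by ring
  rw [le_mul_inv_iff₀ hrd] at hbound
  rw [le_div_iff₀ hd]
  linarith

section SpectralProjection

variable {H : Type*} [NormedAddCommGroup H] [InnerProductSpace ℂ H] [CompleteSpace H]
  {A : H →L[ℂ] H} {σ τ : Set ℝ} {d : ℝ}

lemma isStarProjection_specProj (h : ContinuousOn (σ.indicator fun _ => (1 : ℝ)) (spectrum ℝ A)) :
    IsStarProjection (specProj A σ) where
  isIdempotentElem := by
    rw [IsIdempotentElem, specProj, ← cfc_mul _ _ A h h]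
    exact cfc_congr fun x _ => by by_cases hx : x ∈ σ <;> simp [hx]
  isSelfAdjoint := cfc_predicate _ A

lemma specProj_add_specProj (hA : IsSelfAdjoint A) (hspec : spectrum ℝ A = σ ∪ τ)
    (hdisj : Disjoint σ τ) (hσ : ContinuousOn (σ.indicator fun _ => (1 : ℝ)) (spectrum ℝ A))
    (hτ : ContinuousOn (τ.indicator fun _ => (1 : ℝ)) (spectrum ℝ A)) :
    specProj A σ + specProj A τ = 1 := by
  rw [specProj, specProj, ← cfc_add _ _ _ hσ hτ, ← cfc_one ℝ A]
  refine cfc_congr fun x hx => ?_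
  rcases hspec ▸ hx with hx | hx
  · simp [hx, Set.disjoint_left.1 hdisj hx]
  · simp [hx, Set.disjoint_right.1 hdisj hx]

lemma norm_specProj_mul_cfc_sub_le {m r : ℝ}
    (h : ContinuousOn (σ.indicator fun _ => (1 : ℝ)) (spectrum ℝ A)) (hr : 0 ≤ r)
    (hσr : ∀ x ∈ σ, |x - m| ≤ r) : ‖specProj A σ * cfc (fun x : ℝ => x - m) A‖ ≤ r := by
  rw [specProj, ← cfc_mul _ _ A h (by fun_prop)]
  refine norm_cfc_le hr fun x _ => ?_
  by_cases hx : x ∈ σ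
  · simpa [hx] using hσr x hx
  · simpa [hx] using hr

lemma exists_inverse_cfc_sub_on_specProj (hspec : spectrum ℝ A = σ ∪ τ) (hd : 0 < d)
    (hdist : ∀ x ∈ σ, ∀ y ∈ τ, d ≤ |x - y|) {m r : ℝ} (hr : 0 ≤ r)
    (hτr : ∀ y ∈ τ, r + d ≤ |y - m|) :
    ∃ G, ‖G‖ ≤ (r + d)⁻¹ ∧ cfc (fun x : ℝ => x - m) A * specProj A τ * G = specProj A τ := by
  have hτm (x) (hx : x ∈ τ) : x - m ≠ 0 := fun h0 => by
    have := hτr x hx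
    rw [h0, abs_zero] at this
    linarith
  have hcont {f : ℝ → ℝ} (hf : ContinuousOn f τ) : ContinuousOn (τ.indicator f) (spectrum ℝ A) :=
    hspec ▸ continuousOn_indicator_union_right hd hdist hf
  have hcont_sub : ContinuousOn (fun x : ℝ => x - m) (spectrum ℝ A) := by fun_prop
  have hcontM : ContinuousOn (fun x => (x - m) * τ.indicator (fun _ => (1 : ℝ)) x)
      (spectrum ℝ A) := hcont_sub.mul (hcont continuousOn_const)
  have hcontG : ContinuousOn (τ.indicator fun x => (x - m)⁻¹) (spectrum ℝ A) :=
    hcont ((continuousOn_id.sub continuousOn_const).inv₀ hτm)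
  refine ⟨cfc (τ.indicator fun x => (x - m)⁻¹) A, ?_, ?_⟩
  · refine norm_cfc_le (by positivity) fun x _ => ?_
    by_cases hx : x ∈ τ
    · simpa [hx] using inv_anti₀ (by positivity) (hτr x hx)
    · simpa [hx] using (by positivity : (0 : ℝ) ≤ (r + d)⁻¹)
  · rw [specProj, ← cfc_mul _ _ A hcont_sub (hcont continuousOn_const),
      ← cfc_mul _ _ A hcontM hcontG]
    refine cfc_congr fun x _ => ?_
    by_cases hx : x ∈ τ
    · simp [hx, hτm x hx]
    · simp [hx]

theorem norm_specProj_mul_mul_specProj_le (hA : IsSelfAdjoint A) (hspec : spectrum ℝ A = σ ∪ τ)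
    (hd : 0 < d) (hdist : ∀ x ∈ σ, ∀ y ∈ τ, d ≤ |x - y|) (hconv : Disjoint (convexHull ℝ σ) τ)
    (X : H →L[ℂ] H) : ‖specProj A σ * X * specProj A τ‖ ≤ ‖A * X - X * A‖ / d := by
  rcases σ.eq_empty_or_nonempty with rfl | hne
  · simp [specProj]
    positivity
  obtain ⟨m, r, hr, hσr, hτr⟩ := exists_center_radius_of_disjoint_convexHull hne
    ((spectrum.isBounded A).subset (hspec ▸ Set.subset_union_left)) hdist hconv
  have hcontσ : ContinuousOn (σ.indicator fun _ => (1 : ℝ)) (spectrum ℝ A) :=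
    hspec ▸ continuousOn_indicator_union_left hd hdist continuousOn_const
  have hP : IsStarProjection (specProj A σ) := isStarProjection_specProj hcontσ
  have hPτ : IsStarProjection (specProj A τ) := isStarProjection_specProj
    (hspec ▸ continuousOn_indicator_union_right hd hdist continuousOn_const)
  have hN := norm_specProj_mul_cfc_sub_le hcontσ hr hσr
  obtain ⟨G, hG, hMG⟩ := exists_inverse_cfc_sub_on_specProj hspec hd hdist hr hτr
  have hS : cfc (fun x : ℝ => x - m) A = A - algebraMap ℝ _ m := by
    rw [cfc_sub (fun x : ℝ => x) (fun _ => m) A, cfc_id' ℝ A, cfc_const m A]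
  set P := specProj A σ
  set Pτ := specProj A τ
  set S := cfc (fun x : ℝ => x - m) A
  have hSP : Commute S P := cfc_commute_cfc _ _ A
  have hSPτ : Commute S Pτ := cfc_commute_cfc _ _ A
  have hYE : P * X * Pτ * Pτ = P * X * Pτ := by rw [mul_assoc _ Pτ, hPτ.isIdempotentElem.eq]
  have hC : P * S * (P * X * Pτ) - P * X * Pτ * (S * Pτ) = P * (A * X - X * A) * Pτ := calc
    _ = P * S * P * X * Pτ - P * X * (Pτ * S * Pτ) := by simp only [mul_assoc]
    _ = P * S * X * Pτ - P * X * (S * Pτ) := by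
      rw [mul_assoc P S, hSP.eq, ← mul_assoc, hP.isIdempotentElem.eq, ← hSPτ.eq, mul_assoc S,
        hPτ.isIdempotentElem.eq]
    _ = P * (S * X - X * S) * Pτ := by noncomm_ring
    _ = P * (A * X - X * A) * Pτ := by
      rw [hS, sub_mul, mul_sub X, Algebra.commutes]; congr 2; abel
  calc ‖P * X * Pτ‖ ≤ ‖P * (A * X - X * A) * Pτ‖ / d :=
        norm_le_div_of_mul_sub_mul_eq hd hN hG hMG hYE hC
    _ ≤ ‖P‖ * ‖A * X - X * A‖ * ‖Pτ‖ / d := by gcongr; exact norm_mul₃_le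
    _ ≤ 1 * ‖A * X - X * A‖ * 1 / d := by gcongr; exacts [hP.norm_le, hPτ.norm_le]
    _ = ‖A * X - X * A‖ / d := by ring

end SpectralProjection

lemma Real.sin_two_mul_arcsin {t : ℝ} (h₀ : -1 ≤ t) (h₁ : t ≤ 1) :
    sin (2 * arcsin t) = 2 * t * √(1 - t ^ 2) := by
  rw [Real.sin_two_mul, sin_arcsin h₀ h₁, cos_arcsin, mul_assoc]

/-- the `sin 2θ` estimate for semidefinite perturbations, under the additional
geometric assumption that the convex hull of one spectral component is disjoint from the other:
`sin(2 arcsin ‖E_A(σ) - Q‖) ≤ ‖V‖/d`. -/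
theorem sin_two_theta_semidefinite_convex
    {H : Type*} [NormedAddCommGroup H] [InnerProductSpace ℂ H] [CompleteSpace H]
    (A V Q : H →L[ℂ] H) (hA : IsSelfAdjoint A)
    (σ τ : Set ℝ) (hspec : spectrum ℝ A = σ ∪ τ) (hdisj : Disjoint σ τ)
    (d : ℝ) (hd : 0 < d) (hdist : ∀ x ∈ σ, ∀ y ∈ τ, d ≤ |x - y|)
    (hconv : Disjoint (convexHull ℝ σ) τ ∨ Disjoint (convexHull ℝ τ) σ)
    (hV : 0 ≤ V) (hQ : IsSelfAdjoint Q) (hQ2 : Q ∘L Q = Q)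
    (hcomm : Q ∘L (A + V) = (A + V) ∘L Q) :
    Real.sin (2 * Real.arcsin ‖specProj A σ - Q‖) ≤ ‖V‖ / d := by
  have hdist' : ∀ y ∈ τ, ∀ x ∈ σ, d ≤ |y - x| := fun y hy x hx =>
    abs_sub_comm x y ▸ hdist x hx y hy
  have hcontσ : ContinuousOn (σ.indicator fun _ => (1 : ℝ)) (spectrum ℝ A) :=
    hspec ▸ continuousOn_indicator_union_left hd hdist continuousOn_const
  have hcontτ : ContinuousOn (τ.indicator fun _ => (1 : ℝ)) (spectrum ℝ A) :=
    hspec ▸ continuousOn_indicator_union_right hd hdist continuousOn_const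
  set P := specProj A σ
  have hP : IsStarProjection P := isStarProjection_specProj hcontσ
  have hQ' : IsStarProjection Q := ⟨hQ2, hQ⟩
  have hPτ : specProj A τ = 1 - P :=
    eq_sub_of_add_eq' (specProj_add_specProj hA hspec hdisj hcontσ hcontτ)
  have hAQ : A * Q - Q * A = Q * V - V * Q := by
    have h : Q * (A + V) = (A + V) * Q := hcomm
    rw [mul_add, add_mul] at h
    rw [sub_eq_sub_iff_add_eq_add, ← h, add_comm]
  have hoff : ‖P * Q * (1 - P)‖ ≤ ‖A * Q - Q * A‖ / d := by
    rw [← hPτ]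
    rcases hconv with h | h
    · exact norm_specProj_mul_mul_specProj_le hA hspec hd hdist h Q
    · have := norm_specProj_mul_mul_specProj_le hA (hspec.trans (Set.union_comm σ τ)) hd hdist' h Q
      rwa [← norm_star, star_mul, star_mul, hP.isSelfAdjoint.star_eq, hQ.star_eq,
        (show IsSelfAdjoint (specProj A τ) from cfc_predicate _ A).star_eq, ← mul_assoc] at this
  rw [sin_two_mul_arcsin (by linarith [norm_nonneg (P - Q)]) (hP.norm_sub_le_one hQ')]
  calc 2 * ‖P - Q‖ * √(1 - ‖P - Q‖ ^ 2) ≤ 2 * ‖P * Q * (1 - P)‖ := by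
        linarith [hP.norm_sub_mul_sqrt_le hQ', hP.norm_commutator_le_norm_mul_mul_one_sub hQ]
    _ ≤ 2 * (‖Q * V - V * Q‖ / d) := by rw [← hAQ]; gcongr
    _ ≤ 2 * (‖V‖ / 2 / d) := by gcongr; exact hQ'.norm_commutator_le_of_nonneg hV
    _ = ‖V‖ / d := by ring
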